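/- arXiv:2203.04536 — 2 statements merged into one kernel-verified Lean document; each statement's English description precedes it below -/
import Mathlib

section
/- There exists a constant c > 0 such that for all M₁ > 0, M₂ > 0, and ε ∈ (0, M₁M₂/2), there exist a nonempty finite set X, a probability distribution μ over X, and function classes F₁ ⊆ [−M₁,M₁]^X and F₂ ⊆ [−M₂,M₂]^X with F₂ finite, such that log N_{μ,F₂}(F₁, ε) ≥ c · (1 + log|F₂|) · (M₁M₂/ε)² · ( log(M₁M₂/ε) )^{−1}. -/
open scoped ENNReal Pointwise

noncomputable section

namespace OI

/-- Expectation of a real-valued function under a probability mass function. -/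
def pexp {α : Type*} (q : PMF α) (f : α → ℝ) : ℝ := ∑' a, (q a).toReal * f a

/-- Inner product of two functions w.r.t. the distribution `μ`. -/
def inn {X : Type*} (μ : PMF X) (f g : X → ℝ) : ℝ := pexp μ fun x => f x * g x

/-- Dual Minkowski (semi)norm of `f` w.r.t. the class `F`. -/
def dnorm {X : Type*} (μ : PMF X) (F : Set (X → ℝ)) (f : X → ℝ) : ℝ :=
  sSup ((fun g => |inn μ f g|) '' F)

/-- `C` is an ε-covering of `G` w.r.t. the seminorm defined by `F`. -/
def IsCover {X : Type*} (μ : PMF X) (F G : Set (X → ℝ)) (ε : ℝ) (C : Set (X → ℝ)) : Prop :=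
  C ⊆ G ∧ ∀ g ∈ G, ∃ c ∈ C, dnorm μ F (g - c) ≤ ε

/-- Covering number `N_{μ,F}(G, ε)` (`⊤` if no finite covering exists). -/
def covN {X : Type*} (μ : PMF X) (F G : Set (X → ℝ)) (ε : ℝ) : ℕ∞ :=
  ⨅ (C : Set (X → ℝ)) (_ : IsCover μ F G ε C), C.encard

/-- Base-2 logarithm of an extended natural number (junk value on `⊤`). -/
def elog2 (N : ℕ∞) : ℝ := Real.logb 2 (N.toNat : ℝ)

/-- Bernoulli distribution on `Bool` with mean (the truncation to `[0,1]` of) `r`. -/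
def bern (r : ℝ) : PMF Bool :=
  PMF.ofFintype (fun b => cond b (min (ENNReal.ofReal r) 1) (1 - min (ENNReal.ofReal r) 1))
    (by simp [add_tsub_cancel_of_le (min_le_right (ENNReal.ofReal r) 1)])

/-- The distribution `μ_p` of individual-outcome pairs. -/
def exDist {X : Type*} (μ : PMF X) (p : X → ℝ) : PMF (X × Bool) :=
  μ.bind fun x => (bern (p x)).map fun o => (x, o)

/-- `n` i.i.d. samples from `q`. -/
def iid {α : Type*} (q : PMF α) : (n : ℕ) → PMF (Fin n → α)
  | 0 => PMF.pure Fin.elim0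
  | n + 1 => (iid q n).bind fun v => q.map fun a => Fin.cons a v

/-- Probability of an event under a PMF. -/
def prob {α : Type*} (q : PMF α) (E : Set α) : ℝ≥0∞ := q.toOuterMeasure E

/-- A (possibly randomized) `n`-sample learner. -/
abbrev Learner (X : Type*) (n : ℕ) := (Fin n → X × Bool) → PMF (X → ℝ)

/-- Distribution of the learner output on `n` i.i.d. samples from `μ_{p*}`. -/
def outDist {X : Type*} (μ : PMF X) (pstar : X → ℝ) {n : ℕ} (A : Learner X n) :
    PMF (X → ℝ) :=
  (iid (exDist μ pstar) n).bind A

/-- `p` is a predictor, i.e. takes values in `[0,1]`. -/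
def Predictor {X : Type*} (p : X → ℝ) : Prop := ∀ x, p x ∈ Set.Icc (0 : ℝ) 1

/-- `d` takes values in `[-1,1]`. -/
def Dist1 {X : Type*} (d : X → ℝ) : Prop := ∀ x, d x ∈ Set.Icc (-1 : ℝ) 1

/-- The class `[0,1]^X` of all predictors. -/
def allPred (X : Type*) : Set (X → ℝ) := {p | Predictor p}

/-- The learner `A` succeeds for target `pstar`: with probability at least `1 - δ` it outputs
a predictor whose maximum distinguishing advantage w.r.t. `pstar` over `D` is at most `ε`. -/
def Achieves {X : Type*} (μ : PMF X) (D : Set (X → ℝ)) (ε δ : ℝ) (pstar : X → ℝ) {n : ℕ}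
    (A : Learner X n) : Prop :=
  ENNReal.ofReal (1 - δ) ≤
    prob (outDist μ pstar A) {p | Predictor p ∧ dnorm μ D (p - pstar) ≤ ε}

/-- The agnostic benchmark `inf_{p' ∈ P} ‖p' - pstar‖_{μ,D}`. -/
def agTarget {X : Type*} (μ : PMF X) (P D : Set (X → ℝ)) (pstar : X → ℝ) : ℝ :=
  sInf ((fun p' => dnorm μ D (p' - pstar)) '' P)

/-- The learner `A` succeeds agnostically for target `pstar`. -/
def AchievesAg {X : Type*} (μ : PMF X) (P D : Set (X → ℝ)) (ε δ : ℝ) (pstar : X → ℝ) {n : ℕ}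
    (A : Learner X n) : Prop :=
  ENNReal.ofReal (1 - δ) ≤
    prob (outDist μ pstar A)
      {p | Predictor p ∧ dnorm μ D (p - pstar) ≤ agTarget μ P D pstar + ε}

/-- Distribution-specific realizable OI learner. -/
def DSRL {X : Type*} (μ : PMF X) (P D : Set (X → ℝ)) (ε δ : ℝ) (n : ℕ)
    (A : Learner X n) : Prop :=
  ∀ pstar ∈ P, Achieves μ D ε δ pstar A

/-- Distribution-specific agnostic OI learner. -/
def DSAL {X : Type*} (μ : PMF X) (P D : Set (X → ℝ)) (ε δ : ℝ) (n : ℕ)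
    (A : Learner X n) : Prop :=
  ∀ pstar : X → ℝ, Predictor pstar → AchievesAg μ P D ε δ pstar A

/-- Distribution-free realizable OI learner. -/
def DFRL {X : Type*} (P D : Set (X → ℝ)) (ε δ : ℝ) (n : ℕ) (A : Learner X n) : Prop :=
  ∀ μ : PMF X, DSRL μ P D ε δ n A

/-- Distribution-free agnostic OI learner. -/
def DFAL {X : Type*} (P D : Set (X → ℝ)) (ε δ : ℝ) (n : ℕ) (A : Learner X n) : Prop :=
  ∀ μ : PMF X, DSAL μ P D ε δ n A

/-- Sample complexity of distribution-specific realizable OI. -/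
def SAMPDSR {X : Type*} (μ : PMF X) (P D : Set (X → ℝ)) (ε δ : ℝ) : ℕ∞ :=
  ⨅ (n : ℕ) (_ : ∃ A : Learner X n, DSRL μ P D ε δ n A), (n : ℕ∞)

/-- Sample complexity of distribution-specific agnostic OI. -/
def SAMPDSA {X : Type*} (μ : PMF X) (P D : Set (X → ℝ)) (ε δ : ℝ) : ℕ∞ :=
  ⨅ (n : ℕ) (_ : ∃ A : Learner X n, DSAL μ P D ε δ n A), (n : ℕ∞)

/-- Sample complexity of distribution-free realizable OI. -/
def SAMPDFR {X : Type*} (P D : Set (X → ℝ)) (ε δ : ℝ) : ℕ∞ :=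
  ⨅ (n : ℕ) (_ : ∃ A : Learner X n, DFRL P D ε δ n A), (n : ℕ∞)

/-- Sample complexity of distribution-free agnostic OI. -/
def SAMPDFA {X : Type*} (P D : Set (X → ℝ)) (ε δ : ℝ) : ℕ∞ :=
  ⨅ (n : ℕ) (_ : ∃ A : Learner X n, DFAL P D ε δ n A), (n : ℕ∞)

/-- The points `x 0, …, x (n-1)` are `γ`-fat shattered by `F`. -/
def Shatters {X : Type*} (F : Set (X → ℝ)) (γ : ℝ) {n : ℕ} (x : Fin n → X) : Prop :=
  ∃ r : Fin n → ℝ, ∀ b : Fin n → Bool, ∃ f ∈ F,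
    ∀ i, γ ≤ (if b i then (1 : ℝ) else -1) * (f (x i) - r i)

/-- The `γ`-fat-shattering dimension of `F`. -/
def fatDim {X : Type*} (F : Set (X → ℝ)) (γ : ℝ) : ℕ∞ :=
  ⨆ (n : ℕ) (_ : ∃ x : Fin n → X, Shatters F γ x), (n : ℕ∞)

end OI


open OI

/-! Take `X = {0,1}^m` with the uniform distribution, `F₂` the Walsh characters scaled by `M₂`
and `F₁` all `±M₁`-valued functions, with `2^m ≈ (M₁M₂/ε)²/2`. By Parseval, two functions of
`F₁` that are `ε`-close in `‖·‖_{μ,F₂}` differ in at most `2^m/8` points, and Hamming balls of that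
radius are so small that an `ε`-cover of the `2^(2^m)` functions of `F₁` needs `2^(2^m/4)`
elements. On the other side `log |F₂| = m ≈ 2 log (M₁M₂/ε)`. -/

namespace OI

variable {X : Type*}

lemma inn_uniformOfFintype [Fintype X] [Nonempty X] (f g : X → ℝ) :
    inn (PMF.uniformOfFintype X) f g = (Fintype.card X : ℝ)⁻¹ * ∑ x, f x * g x := by
  simp [inn, pexp, tsum_fintype, Finset.mul_sum]

lemma abs_inn_le_dnorm {μ : PMF X} {F : Set (X → ℝ)} (hF : F.Finite) (f : X → ℝ)
    {g : X → ℝ} (hg : g ∈ F) : |inn μ f g| ≤ dnorm μ F f :=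
  le_csSup (hF.image _).bddAbove ⟨g, hg, rfl⟩

lemma dnorm_zero_nonpos (μ : PMF X) (F : Set (X → ℝ)) : dnorm μ F 0 ≤ 0 :=
  Real.sSup_nonpos fun _ ⟨g, _, hg⟩ => by simp [← hg, inn, pexp]

lemma isCover_self (μ : PMF X) (F G : Set (X → ℝ)) {ε : ℝ} (hε : 0 ≤ ε) :
    IsCover μ F G ε G :=
  ⟨subset_rfl, fun g hg => ⟨g, hg, by simpa using (dnorm_zero_nonpos μ F).trans hε⟩⟩

lemma exists_isCover_encard_eq_covN (μ : PMF X) (F G : Set (X → ℝ)) {ε : ℝ} (hε : 0 ≤ ε) :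
    ∃ C, IsCover μ F G ε C ∧ C.encard = covN μ F G ε := by
  have : Nonempty {C // IsCover μ F G ε C} := ⟨⟨G, isCover_self μ F G hε⟩⟩
  obtain ⟨⟨C, hC⟩, hCmin⟩ := ciInf_mem fun C : {C // IsCover μ F G ε C} => C.1.encard
  exact ⟨C, hC, by rw [covN, iInf_subtype', ← hCmin]⟩

end OI

section HammingBall

open Finset

variable {α : Type*} [Fintype α] [DecidableEq α]

lemma card_hammingBall_mul_le (τ : α → Bool) (d : ℕ) {p : ℝ} (hp₀ : 0 ≤ p) (hp₁ : p ≤ 1) :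
    (#{σ | hammingDist σ τ ≤ d} : ℝ) * (p ^ d * (1 - p) ^ Fintype.card α) ≤ 1 := by
  -- `weight` is the law of `τ` with each coordinate flipped independently with probability `p`.
  set weight : (α → Bool) → ℝ := fun σ => ∏ x, if σ x ≠ τ x then p else 1 - p
  have hweight_nonneg : ∀ σ, 0 ≤ weight σ := fun σ =>
    prod_nonneg fun x _ => by split <;> linarith
  have hweight_sum : ∑ σ, weight σ = 1 := by
    rw [← Fintype.prod_sum fun x b => if b ≠ τ x then p else 1 - p]
    refine prod_eq_one fun x _ => ?_
    cases τ x <;> simp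
  have hweight_ge : ∀ σ, hammingDist σ τ ≤ d → p ^ d * (1 - p) ^ Fintype.card α ≤ weight σ := by
    intro σ hσ
    simp only [weight]
    rw [prod_ite, prod_const, prod_const, ← hammingDist]
    exact mul_le_mul (pow_le_pow_of_le_one hp₀ hp₁ hσ)
      (pow_le_pow_of_le_one (by linarith) (by linarith) (card_le_univ _)) (by positivity)
      (pow_nonneg hp₀ _)
  calc (#{σ | hammingDist σ τ ≤ d} : ℝ) * (p ^ d * (1 - p) ^ Fintype.card α)
      = ∑ σ with hammingDist σ τ ≤ d, p ^ d * (1 - p) ^ Fintype.card α := by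
        rw [sum_const, nsmul_eq_mul]
    _ ≤ ∑ σ with hammingDist σ τ ≤ d, weight σ :=
        sum_le_sum fun σ hσ => hweight_ge σ (mem_filter.1 hσ).2
    _ ≤ ∑ σ, weight σ :=
        sum_le_sum_of_subset_of_nonneg (subset_univ _) fun σ _ _ => hweight_nonneg σ
    _ = 1 := hweight_sum

lemma card_hammingBall_le (τ : α → Bool) (d : ℕ) :
    (#{σ | hammingDist σ τ ≤ d} : ℝ) ≤ 4 ^ d * (4 / 3) ^ Fintype.card α := by
  have h := card_hammingBall_mul_le τ d (p := 1 / 4) (by norm_num) (by norm_num)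
  rw [← le_div_iff₀ (by positivity)] at h
  refine h.trans_eq ?_
  rw [one_div, mul_inv, ← inv_pow, ← inv_pow]
  norm_num

lemma two_pow_card_le_ncard_mul (T : Set (α → Bool)) (d : ℕ)
    (hT : ∀ σ, ∃ τ ∈ T, hammingDist σ τ ≤ d) :
    (2 : ℝ) ^ Fintype.card α ≤ T.ncard * (4 ^ d * (4 / 3) ^ Fintype.card α) := by
  classical
  have hcover : (univ : Finset (α → Bool)) ⊆
      T.toFinset.biUnion fun τ => {σ | hammingDist σ τ ≤ d} := fun σ _ => by
    obtain ⟨τ, hτ, hστ⟩ := hT σ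
    simpa using ⟨τ, hτ, hστ⟩
  calc (2 : ℝ) ^ Fintype.card α = #(univ : Finset (α → Bool)) := by simp
    _ ≤ ∑ τ ∈ T.toFinset, (#{σ | hammingDist σ τ ≤ d} : ℝ) := by
        exact_mod_cast (card_le_card hcover).trans card_biUnion_le
    _ ≤ ∑ _τ ∈ T.toFinset, 4 ^ d * (4 / 3 : ℝ) ^ Fintype.card α :=
        sum_le_sum fun τ _ => card_hammingBall_le τ d
    _ = T.ncard * (4 ^ d * (4 / 3) ^ Fintype.card α) := by
        rw [sum_const, nsmul_eq_mul, Set.ncard_eq_toFinset_card']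

theorem two_pow_card_le_ncard_pow_four (T : Set (α → Bool))
    (hT : ∀ σ, ∃ τ ∈ T, 8 * hammingDist σ τ ≤ Fintype.card α) :
    2 ^ Fintype.card α ≤ T.ncard ^ 4 := by
  set N := Fintype.card α
  set d := N / 8
  have hcount := two_pow_card_le_ncard_mul T d fun σ => by
    obtain ⟨τ, hτ, hστ⟩ := hT σ
    exact ⟨τ, hτ, (Nat.le_div_iff_mul_le (by norm_num)).2 (by linarith)⟩
  have h8d : (2 : ℝ) ^ (8 * d) ≤ 2 ^ N := pow_le_pow_right₀ one_le_two (by omega)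
  have hfourth : ((3 : ℝ) / 2) ^ N ≤ T.ncard * 4 ^ d := by
    refine le_of_mul_le_mul_right ?_ (by positivity : (0 : ℝ) < (4 / 3) ^ N)
    calc ((3 : ℝ) / 2) ^ N * (4 / 3) ^ N = 2 ^ N := by rw [← mul_pow]; norm_num
      _ ≤ _ := hcount
      _ = _ := by ring
  suffices (2 : ℝ) ^ N * 2 ^ N ≤ T.ncard ^ 4 * 2 ^ N by
    exact_mod_cast le_of_mul_le_mul_right this (by positivity)
  calc (2 : ℝ) ^ N * 2 ^ N = 4 ^ N := by rw [← mul_pow]; norm_num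
    _ ≤ (((3 : ℝ) / 2) ^ 4) ^ N := pow_le_pow_left₀ (by norm_num) (by norm_num) N
    _ = (((3 : ℝ) / 2) ^ N) ^ 4 := by rw [← pow_mul, ← pow_mul, mul_comm]
    _ ≤ (T.ncard * 4 ^ d) ^ 4 := pow_le_pow_left₀ (by positivity) hfourth 4
    _ = T.ncard ^ 4 * 2 ^ (8 * d) := by
        rw [mul_pow, show (4 : ℝ) = 2 ^ 2 by norm_num, ← pow_mul, ← pow_mul]; ring_nf
    _ ≤ T.ncard ^ 4 * 2 ^ N := by gcongr

end HammingBall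

namespace OI.Walsh

open Finset

variable {ι : Type*}

def signFun (M : ℝ) (σ : (ι → Bool) → Bool) (x : ι → Bool) : ℝ :=
  if σ x then M else -M

def signClass (M : ℝ) : Set ((ι → Bool) → ℝ) := Set.range (signFun M)

lemma signFun_injective {M : ℝ} (hM : M ≠ 0) : Function.Injective (signFun (ι := ι) M) := by
  intro σ τ h
  funext x
  have hx := congrFun h x
  simp only [signFun] at hx
  cases hσ : σ x <;> cases hτ : τ x <;> simp [hσ, hτ] at hx ⊢ <;>
    exact hM (by linarith)

lemma abs_le_of_mem_signClass {M : ℝ} (hM : 0 ≤ M) {f : (ι → Bool) → ℝ}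
    (hf : f ∈ signClass M) (x : ι → Bool) : |f x| ≤ M := by
  obtain ⟨σ, rfl⟩ := hf
  unfold signFun
  split <;> simp [abs_of_nonneg hM]

variable [Fintype ι]

/-- `walsh a x = (-1) ^ ⟨a, x⟩`, the characters of `(ZMod 2) ^ ι`. -/
def walsh (a x : ι → Bool) : ℝ :=
  ∏ i, if a i && x i then -1 else 1

lemma abs_walsh (a x : ι → Bool) : |walsh a x| = 1 := by
  rw [walsh, abs_prod]
  exact prod_eq_one fun i _ => by split <;> simp

def walshClass (M : ℝ) : Set ((ι → Bool) → ℝ) := Set.range fun a x => M * walsh a x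

lemma abs_le_of_mem_walshClass {M : ℝ} (hM : 0 ≤ M) {f : (ι → Bool) → ℝ}
    (hf : f ∈ walshClass M) (x : ι → Bool) : |f x| ≤ M := by
  obtain ⟨a, rfl⟩ := hf
  rw [abs_mul, abs_walsh, mul_one, abs_of_nonneg hM]

lemma ncard_walshClass_le (M : ℝ) : (walshClass (ι := ι) M).ncard ≤ 2 ^ Fintype.card ι := by
  rw [walshClass, ← Set.image_univ]
  refine (Set.ncard_image_le Set.finite_univ).trans ?_
  simp [Set.ncard_univ, Nat.card_fun]

variable [DecidableEq ι]

lemma sum_walsh_mul_walsh (x y : ι → Bool) :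
    ∑ a, walsh a x * walsh a y = if x = y then 2 ^ Fintype.card ι else 0 := by
  have hcoord : ∀ i, ∑ b : Bool, (if b && x i then (-1 : ℝ) else 1) *
      (if b && y i then -1 else 1) = if x i = y i then 2 else 0 := by
    intro i
    cases x i <;> cases y i <;> norm_num
  simp_rw [walsh, ← prod_mul_distrib]
  rw [← Fintype.prod_sum fun i b => (if b && x i then (-1 : ℝ) else 1) *
      (if b && y i then -1 else 1)]
  simp_rw [hcoord]
  split_ifs with hxy
  · simp [hxy]
  · obtain ⟨i, hi⟩ := Function.ne_iff.mp hxy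
    exact prod_eq_zero (mem_univ i) (if_neg hi)

theorem sum_sq_sum_mul_walsh (v : (ι → Bool) → ℝ) :
    ∑ a, (∑ x, v x * walsh a x) ^ 2 = 2 ^ Fintype.card ι * ∑ x, v x ^ 2 := by
  calc ∑ a, (∑ x, v x * walsh a x) ^ 2
      = ∑ x, ∑ y, v x * v y * ∑ a, walsh a x * walsh a y := by
        simp_rw [sq, sum_mul_sum, mul_sum]
        rw [sum_comm]
        refine sum_congr rfl fun x _ => ?_
        rw [sum_comm]
        exact sum_congr rfl fun y _ => sum_congr rfl fun a _ => by ring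
    _ = 2 ^ Fintype.card ι * ∑ x, v x ^ 2 := by
        simp_rw [sum_walsh_mul_walsh, mul_ite, mul_zero, sum_ite_eq, mem_univ, if_true,
          mul_sum]
        exact sum_congr rfl fun x _ => by ring

lemma sum_sq_signFun_sub (M : ℝ) (σ τ : (ι → Bool) → Bool) :
    ∑ x, (signFun M σ x - signFun M τ x) ^ 2 = (2 * M) ^ 2 * hammingDist σ τ := by
  rw [hammingDist, natCast_card_filter, mul_sum]
  refine sum_congr rfl fun x _ => ?_
  simp only [signFun]
  cases σ x <;> cases τ x <;> simp <;> ring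

theorem sq_mul_hammingDist_le_of_dnorm_le {M₁ M₂ ε : ℝ} {σ τ : (ι → Bool) → Bool}
    (h : dnorm (PMF.uniformOfFintype _) (walshClass M₂) (signFun M₁ σ - signFun M₁ τ) ≤ ε) :
    (2 * M₁ * M₂) ^ 2 * hammingDist σ τ ≤ (ε * 2 ^ Fintype.card ι) ^ 2 := by
  set N : ℝ := 2 ^ Fintype.card ι
  set w := signFun M₁ σ - signFun M₁ τ
  have hcard : (Fintype.card (ι → Bool) : ℝ) = N := by simp [N]
  have hcoeff : ∀ a, (M₂ * ∑ x, w x * walsh a x) ^ 2 ≤ (ε * N) ^ 2 := by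
    intro a
    have ha := (abs_inn_le_dnorm (Set.finite_range _) w ⟨a, rfl⟩).trans h
    rw [inn_uniformOfFintype, hcard, abs_mul, abs_inv, abs_of_pos (by positivity : 0 < N),
      inv_mul_le_iff₀ (by positivity)] at ha
    rw [← sq_abs, mul_comm ε]
    refine pow_le_pow_left₀ (abs_nonneg _) (le_of_eq_of_le ?_ ha) 2
    rw [mul_sum]
    exact congrArg abs (sum_congr rfl fun x _ => by ring)
  have hparseval := sum_sq_sum_mul_walsh w
  have hsq : ∑ x, w x ^ 2 = (2 * M₁) ^ 2 * hammingDist σ τ := sum_sq_signFun_sub M₁ σ τ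
  rw [hsq] at hparseval
  refine le_of_mul_le_mul_left ?_ (by positivity : 0 < N)
  calc N * ((2 * M₁ * M₂) ^ 2 * hammingDist σ τ)
      = ∑ a, (M₂ * ∑ x, w x * walsh a x) ^ 2 := by
        simp_rw [mul_pow M₂, ← mul_sum, hparseval]; ring
    _ ≤ ∑ _a : ι → Bool, (ε * N) ^ 2 := sum_le_sum fun a _ => hcoeff a
    _ = N * (ε * N) ^ 2 := by rw [sum_const, card_univ, nsmul_eq_mul, hcard]

lemma eight_mul_hammingDist_le_of_dnorm_le {M₁ M₂ ε : ℝ} (hM₁ : M₁ ≠ 0) (hM₂ : M₂ ≠ 0)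
    (hcard : 2 * 2 ^ Fintype.card ι * ε ^ 2 ≤ (M₁ * M₂) ^ 2) {σ τ : (ι → Bool) → Bool}
    (h : dnorm (PMF.uniformOfFintype _) (walshClass M₂) (signFun M₁ σ - signFun M₁ τ) ≤ ε) :
    8 * hammingDist σ τ ≤ 2 ^ Fintype.card ι := by
  have hdist := sq_mul_hammingDist_le_of_dnorm_le h
  suffices (M₁ * M₂) ^ 2 * (8 * hammingDist σ τ : ℝ) ≤ (M₁ * M₂) ^ 2 * 2 ^ Fintype.card ι by
    exact_mod_cast le_of_mul_le_mul_left this (by positivity)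
  nlinarith [pow_pos (two_pos (α := ℝ)) (Fintype.card ι)]

theorem le_four_mul_elog2_covN {M₁ M₂ ε : ℝ} (hM₁ : M₁ ≠ 0) (hM₂ : M₂ ≠ 0) (hε : 0 ≤ ε)
    (hcard : 2 * 2 ^ Fintype.card ι * ε ^ 2 ≤ (M₁ * M₂) ^ 2) :
    (2 : ℝ) ^ Fintype.card ι ≤
      4 * elog2 (covN (PMF.uniformOfFintype (ι → Bool)) (walshClass M₂) (signClass M₁) ε) := by
  set μ := PMF.uniformOfFintype (ι → Bool)
  obtain ⟨C, hC, hCcard⟩ := exists_isCover_encard_eq_covN μ (walshClass M₂) (signClass M₁) hε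
  set T := signFun M₁ ⁻¹' C
  have hTcard : T.ncard = (covN μ (walshClass M₂) (signClass M₁) ε).toNat := by
    rw [Set.ncard_preimage_of_injective_subset_range (signFun_injective hM₁) hC.1, Set.ncard,
      hCcard]
  have hT : ∀ σ, ∃ τ ∈ T, 8 * hammingDist σ τ ≤ Fintype.card (ι → Bool) := by
    intro σ
    obtain ⟨c, hcC, hc⟩ := hC.2 _ ⟨σ, rfl⟩
    obtain ⟨τ, rfl⟩ := hC.1 hcC
    simpa using ⟨τ, hcC, eight_mul_hammingDist_le_of_dnorm_le hM₁ hM₂ hcard hc⟩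
  have hpow := two_pow_card_le_ncard_pow_four T hT
  rw [hTcard, Fintype.card_fun, Fintype.card_bool] at hpow
  calc (2 : ℝ) ^ Fintype.card ι = Real.logb 2 ((2 : ℝ) ^ 2 ^ Fintype.card ι) := by
        rw [Real.logb_pow, Real.logb_self_eq_one one_lt_two]; push_cast; ring
    _ ≤ Real.logb 2 (((covN μ _ _ ε).toNat : ℝ) ^ 4) :=
        Real.logb_le_logb_of_le one_lt_two (by positivity) (by exact_mod_cast hpow)
    _ = _ := by rw [Real.logb_pow, elog2]; norm_num

end OI.Walsh

lemma one_add_logb_mul_sq_div_logb_le {k t : ℝ} {m : ℕ} (hk : 0 < k) (hkm : k ≤ 2 ^ m)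
    (ht : 1 < t) (hm : 2 ^ m ≤ t ^ 2 / 2) (hm' : t ^ 2 / 2 < 2 ^ (m + 1)) :
    1 / 32 * (1 + Real.logb 2 k) * t ^ 2 * (Real.logb 2 t)⁻¹ ≤ 2 ^ m / 4 := by
  have hlogt : 0 < Real.logb 2 t := Real.logb_pos one_lt_two ht
  have hlogk : Real.logb 2 k ≤ m := by
    simpa [Real.logb_pow] using Real.logb_le_logb_of_le one_lt_two hk hkm
  have hlogm : (m : ℝ) + 1 ≤ 2 * Real.logb 2 t := by
    have h := Real.logb_le_logb_of_le one_lt_two (by positivity) (le_div_iff₀' two_pos |>.1 hm)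
    rw [← pow_succ', Real.logb_pow, Real.logb_pow, Real.logb_self_eq_one one_lt_two] at h
    push_cast at h
    linarith
  calc 1 / 32 * (1 + Real.logb 2 k) * t ^ 2 * (Real.logb 2 t)⁻¹
      ≤ 1 / 32 * (2 * Real.logb 2 t) * t ^ 2 * (Real.logb 2 t)⁻¹ := by gcongr; linarith
    _ = t ^ 2 / 16 := by field_simp; ring
    _ ≤ 2 ^ m / 4 := by rw [pow_succ (2 : ℝ)] at hm'; linarith

open OI.Walsh in
/-- near-tightness of the metric entropy duality variant: there is `c > 0` such
that for all `M₁, M₂ > 0` and `ε ∈ (0, M₁M₂/2)` there are a nonempty finite set `X`, a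
distribution `μ` on `X`, and classes `F₁ ⊆ [−M₁,M₁]^X`, `F₂ ⊆ [−M₂,M₂]^X` with `F₂` finite and
`log N_{μ,F₂}(F₁,ε) ≥ c (1 + log|F₂|) (M₁M₂/ε)² (log(M₁M₂/ε))⁻¹`. -/
theorem statement_7 :
    ∃ c : ℝ, 0 < c ∧
      ∀ M₁ M₂ ε : ℝ, 0 < M₁ → 0 < M₂ → ε ∈ Set.Ioo 0 (M₁ * M₂ / 2) →
        ∃ (X : Type) (_ : Nonempty X) (_ : Finite X) (μ : PMF X)
          (F₁ F₂ : Set (X → ℝ)),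
          F₁.Nonempty ∧ F₂.Nonempty ∧ F₂.Finite ∧
          (∀ f ∈ F₁, ∀ x, |f x| ≤ M₁) ∧ (∀ f ∈ F₂, ∀ x, |f x| ≤ M₂) ∧
          c * (1 + Real.logb 2 (F₂.ncard)) * (M₁ * M₂ / ε) ^ 2 *
              (Real.logb 2 (M₁ * M₂ / ε))⁻¹ ≤
            elog2 (covN μ F₂ F₁ ε) := by
  refine ⟨1 / 32, by norm_num, fun M₁ M₂ ε hM₁ hM₂ ⟨hε, hεM⟩ => ?_⟩
  set t := M₁ * M₂ / ε
  have ht : 2 < t := by rw [lt_div_iff₀ hε]; linarith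
  obtain ⟨m, hm, hm'⟩ := exists_nat_pow_near (x := t ^ 2 / 2) (by nlinarith) one_lt_two
  have hcard : 2 * 2 ^ Fintype.card (Fin m) * ε ^ 2 ≤ (M₁ * M₂) ^ 2 := by
    have htε : t ^ 2 * ε ^ 2 = (M₁ * M₂) ^ 2 := by rw [← mul_pow, div_mul_cancel₀ _ hε.ne']
    rw [Fintype.card_fin, ← htε]
    nlinarith [mul_le_mul_of_nonneg_right hm (sq_nonneg ε)]
  have hcover := le_four_mul_elog2_covN hM₁.ne' hM₂.ne' hε.le hcard
  have hF₂ : 0 < ((walshClass (ι := Fin m) M₂).ncard : ℝ) := by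
    exact_mod_cast (Set.ncard_pos (Set.finite_range _)).2 (Set.range_nonempty _)
  refine ⟨Fin m → Bool, inferInstance, inferInstance, PMF.uniformOfFintype _, signClass M₁,
    walshClass M₂, Set.range_nonempty _, Set.range_nonempty _, Set.finite_range _,
    fun f hf => abs_le_of_mem_signClass hM₁.le hf, fun f hf => abs_le_of_mem_walshClass hM₂.le hf,
    ?_⟩
  calc 1 / 32 * (1 + Real.logb 2 (walshClass M₂).ncard) * t ^ 2 * (Real.logb 2 t)⁻¹
      ≤ 2 ^ m / 4 := one_add_logb_mul_sq_div_logb_le hF₂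
        (by simpa using (Nat.cast_le (α := ℝ)).2 (ncard_walshClass_le (ι := Fin m) M₂))
        (by linarith) hm hm'
    _ ≤ _ := by rw [Fintype.card_fin] at hcover; linarith
end
end

section
/- Let μ be a probability distribution over X, let ε > 0, let p, p* : X → [0,1] be predictors, and let d : X → [−1,1]. If ⟨p* − p, d⟩_μ ≥ ε/5, then the updated predictor p' defined by p'(x) = max{0, min{1, p(x) + (ε/5)·d(x)}} satisfies ‖p' − p*‖₂² ≤ ‖p − p*‖₂² − ε²/25, where ‖f‖₂² denotes ⟨f, f⟩_μ. -/
open scoped ENNReal Pointwise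

noncomputable section

/-! Clamping to `[0,1]` moves no point farther from `p* x ∈ [0,1]`, so pointwise
`(p' - p*)² ≤ (p - p* + η d)² ≤ (p - p*)² - 2η (p* - p) d + η²` since `d² ≤ 1`.
Taking expectations and using `⟨p* - p, d⟩ ≥ η` gives a decrease of at least `η²`. -/

open OI Set

lemma abs_max_min_sub_le {α : Type*} [AddCommGroup α] [LinearOrder α] [IsOrderedAddMonoid α]
    {a b d : α} (h : a ≤ b) (hd : d ∈ Icc a b) (c : α) : |max a (min b c) - d| ≤ |c - d| := by
  simpa [projIcc_of_mem h hd, coe_projIcc] using abs_projIcc_sub_projIcc h (c := c) (d := d)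

lemma abs_mul_le_one_of_abs_le_one {a b : ℝ} (ha : |a| ≤ 1) (hb : |b| ≤ 1) : |a * b| ≤ 1 := by
  rw [abs_mul]
  exact mul_le_one₀ ha (abs_nonneg b) hb

namespace OI

variable {X : Type*}

lemma Predictor.abs_sub_le_one {p q : X → ℝ} (hp : Predictor p) (hq : Predictor q) (x : X) :
    |(p - q) x| ≤ 1 := by
  simpa using abs_sub_le_of_le_of_le (hp x).1 (hp x).2 (hq x).1 (hq x).2

lemma Dist1.abs_le_one {d : X → ℝ} (hd : Dist1 d) (x : X) : |d x| ≤ 1 :=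
  abs_le.2 (hd x)

def boostUpdate (p d : X → ℝ) (η : ℝ) : X → ℝ := fun x => max 0 (min 1 (p x + η * d x))

lemma predictor_boostUpdate (p d : X → ℝ) (η : ℝ) : Predictor (boostUpdate p d η) :=
  fun _ => ⟨le_max_left _ _, max_le zero_le_one (min_le_left _ _)⟩

lemma boostUpdate_sub_mul_self_add_le {p s d : X → ℝ} (hs : Predictor s) (hd : Dist1 d)
    (η : ℝ) (x : X) :
    (boostUpdate p d η - s) x * (boostUpdate p d η - s) x + 2 * η * ((s - p) x * d x) ≤
      (p - s) x * (p - s) x + η ^ 2 := by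
  have hclamp : (boostUpdate p d η x - s x) ^ 2 ≤ (p x + η * d x - s x) ^ 2 :=
    sq_le_sq.2 (abs_max_min_sub_le zero_le_one (hs x) _)
  have hd_sq : η ^ 2 * d x ^ 2 ≤ η ^ 2 :=
    mul_le_of_le_one_right (sq_nonneg η) (sq_le_one_iff_abs_le_one _ |>.2 (hd.abs_le_one x))
  simp only [Pi.sub_apply]
  linarith

variable (μ : PMF X)

lemma summable_toReal_mul_of_abs_le {f : X → ℝ} {C : ℝ} (hf : ∀ x, |f x| ≤ C) :
    Summable fun x => (μ x).toReal * f x := by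
  have hμ : Summable fun x => (μ x).toReal := ENNReal.summable_toReal (by simp [μ.tsum_coe])
  refine Summable.of_norm_bounded (hμ.mul_right C) fun x => ?_
  rw [Real.norm_eq_abs, abs_mul, ENNReal.abs_toReal]
  exact mul_le_mul_of_nonneg_left (hf x) ENNReal.toReal_nonneg

lemma pexp_mono {f g : X → ℝ} (hf : Summable fun x => (μ x).toReal * f x)
    (hg : Summable fun x => (μ x).toReal * g x) (h : f ≤ g) : pexp μ f ≤ pexp μ g :=
  hf.tsum_le_tsum (fun x => mul_le_mul_of_nonneg_left (h x) ENNReal.toReal_nonneg) hg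

lemma pexp_add {f g : X → ℝ} (hf : Summable fun x => (μ x).toReal * f x)
    (hg : Summable fun x => (μ x).toReal * g x) :
    pexp μ (fun x => f x + g x) = pexp μ f + pexp μ g := by
  simp only [pexp, mul_add]
  exact hf.tsum_add hg

lemma pexp_const_mul (c : ℝ) (f : X → ℝ) : pexp μ (fun x => c * f x) = c * pexp μ f := by
  simp only [pexp, ← tsum_mul_left]
  congr 1 with x
  ring

lemma pexp_const (c : ℝ) : pexp μ (fun _ => c) = c := by
  rw [pexp, tsum_mul_right, ← ENNReal.tsum_toReal_eq μ.apply_ne_top, μ.tsum_coe,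
    ENNReal.toReal_one, one_mul]


lemma inn_boostUpdate_add_le {p s d : X → ℝ} (hp : Predictor p) (hs : Predictor s)
    (hd : Dist1 d) (η : ℝ) :
    inn μ (boostUpdate p d η - s) (boostUpdate p d η - s) + 2 * η * inn μ (s - p) d ≤
      inn μ (p - s) (p - s) + η ^ 2 := by
  set p' := boostUpdate p d η
  have hsq' : Summable fun x => (μ x).toReal * ((p' - s) x * (p' - s) x) :=
    summable_toReal_mul_of_abs_le μ fun x => abs_mul_le_one_of_abs_le_one
      ((predictor_boostUpdate p d η).abs_sub_le_one hs x)
      ((predictor_boostUpdate p d η).abs_sub_le_one hs x)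
  have hcorr : Summable fun x => (μ x).toReal * (2 * η * ((s - p) x * d x)) := by
    simpa only [mul_left_comm] using (summable_toReal_mul_of_abs_le μ fun x =>
      abs_mul_le_one_of_abs_le_one (hs.abs_sub_le_one hp x) (hd.abs_le_one x)).mul_left (2 * η)
  have hsq : Summable fun x => (μ x).toReal * ((p - s) x * (p - s) x) :=
    summable_toReal_mul_of_abs_le μ fun x =>
      abs_mul_le_one_of_abs_le_one (hp.abs_sub_le_one hs x) (hp.abs_sub_le_one hs x)
  have hconst : Summable fun x => (μ x).toReal * η ^ 2 :=
    summable_toReal_mul_of_abs_le μ fun _ => le_rfl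
  calc inn μ (p' - s) (p' - s) + 2 * η * inn μ (s - p) d
      = pexp μ fun x => (p' - s) x * (p' - s) x + 2 * η * ((s - p) x * d x) := by
        rw [pexp_add μ hsq' hcorr, pexp_const_mul]; rfl
    _ ≤ pexp μ fun x => (p - s) x * (p - s) x + η ^ 2 := by
        refine pexp_mono μ ?_ ?_ (boostUpdate_sub_mul_self_add_le hs hd η)
        · simpa only [mul_add] using hsq'.add hcorr
        · simpa only [mul_add] using hsq.add hconst
    _ = inn μ (p - s) (p - s) + η ^ 2 := by
        rw [pexp_add μ hsq hconst, pexp_const]; rfl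

theorem inn_boostUpdate_le_sub_sq {p s d : X → ℝ} (hp : Predictor p) (hs : Predictor s)
    (hd : Dist1 d) {η : ℝ} (hη : 0 ≤ η) (hcorr : η ≤ inn μ (s - p) d) :
    inn μ (boostUpdate p d η - s) (boostUpdate p d η - s) ≤ inn μ (p - s) (p - s) - η ^ 2 := by
  have hstep := inn_boostUpdate_add_le μ hp hs hd η
  linarith [mul_le_mul_of_nonneg_left hcorr (by positivity : (0 : ℝ) ≤ 2 * η)]

end OI

theorem statement_11_general {X : Type} (μ : PMF X) (ε : ℝ) (hε : 0 < ε)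
    (p pstar d : X → ℝ) (hp : Predictor p) (hpstar : Predictor pstar) (hd : Dist1 d)
    (h : ε / 5 ≤ inn μ (pstar - p) d) :
    inn μ ((fun x => max 0 (min 1 (p x + ε / 5 * d x))) - pstar)
        ((fun x => max 0 (min 1 (p x + ε / 5 * d x))) - pstar) ≤
      inn μ (p - pstar) (p - pstar) - ε ^ 2 / 25 :=
  (inn_boostUpdate_le_sub_sq μ hp hpstar hd (by positivity) h).trans_eq (by ring)

/-- one step of Multiaccuracy Boost: if `⟨p* − p, d⟩_μ ≥ ε/5`, then updating
`p` to `x ↦ clamp_{[0,1]}(p(x) + (ε/5)d(x))` decreases `‖p − p*‖₂² = ⟨p − p*, p − p*⟩_μ` by at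
least `ε²/25`. -/
theorem statement_11 {X : Type} [Nonempty X] (μ : PMF X) (ε : ℝ) (hε : 0 < ε)
    (p pstar d : X → ℝ) (hp : Predictor p) (hpstar : Predictor pstar) (hd : Dist1 d)
    (h : ε / 5 ≤ inn μ (pstar - p) d) :
    inn μ ((fun x => max 0 (min 1 (p x + ε / 5 * d x))) - pstar)
        ((fun x => max 0 (min 1 (p x + ε / 5 * d x))) - pstar) ≤
      inn μ (p - pstar) (p - pstar) - ε ^ 2 / 25 :=
  statement_11_general μ ε hε p pstar d hp hpstar hd h
end
end
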